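/- arXiv:1812.02463 — 3 statements merged into one kernel-verified Lean document; each statement's English description precedes it below -/
import Mathlib

section
/- Let $p, q$ be probability densities with respect to a measure $\mu$ with $p+q>0$ a.e., and set $D^* = p/(p+q)$. Then $\int \log(D^*)\, p\, d\mu + \int \log(1-D^*)\, q\, d\mu = 2\, D_{JS}(p,q) - \log 4$, where $D_{JS}(p,q) = \tfrac12 \mathrm{KL}(p \| \tfrac{p+q}{2}) + \tfrac12 \mathrm{KL}(q \| \tfrac{p+q}{2})$ is the Jensen–Shannon divergence. -/
open MeasureTheory

/-- At the optimal discriminator `D* = p/(p+q)`, the GAN value equals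
`2 D_JS(p,q) - log 4`, where `D_JS(p,q) = ½ KL(p ‖ (p+q)/2) + ½ KL(q ‖ (p+q)/2)`
and `KL(f ‖ g) = ∫ f log(f/g) dμ`. -/
theorem gan_value_eq_js
    {X : Type} [MeasurableSpace X] (μ : Measure X) [SigmaFinite μ]
    (p q : X → ℝ) (hpm : Measurable p) (hqm : Measurable q)
    (hp0 : ∀ x, 0 ≤ p x) (hq0 : ∀ x, 0 ≤ q x)
    (hp1 : ∫ x, p x ∂μ = 1) (hq1 : ∫ x, q x ∂μ = 1)
    (hpos : ∀ᵐ x ∂μ, 0 < p x + q x)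
    (hI1 : Integrable (fun x => Real.log (p x / (p x + q x)) * p x) μ)
    (hI2 : Integrable (fun x => Real.log (1 - p x / (p x + q x)) * q x) μ)
    (hK1 : Integrable (fun x => p x * Real.log (p x / ((p x + q x) / 2))) μ)
    (hK2 : Integrable (fun x => q x * Real.log (q x / ((p x + q x) / 2))) μ) :
    (∫ x, Real.log (p x / (p x + q x)) * p x ∂μ) +
        (∫ x, Real.log (1 - p x / (p x + q x)) * q x ∂μ) =
      2 * ((1 / 2) * (∫ x, p x * Real.log (p x / ((p x + q x) / 2)) ∂μ) +
            (1 / 2) * (∫ x, q x * Real.log (q x / ((p x + q x) / 2)) ∂μ)) -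
        Real.log 4 := by
  have hpInt : Integrable p μ := by
    by_contra h
    rw [integral_undef h] at hp1; norm_num at hp1
  have hqInt : Integrable q μ := by
    by_contra h
    rw [integral_undef h] at hq1; norm_num at hq1
  -- pointwise identities
  have key1 : ∀ᵐ x ∂μ, Real.log (p x / (p x + q x)) * p x =
      p x * Real.log (p x / ((p x + q x) / 2)) - Real.log 2 * p x := by
    filter_upwards [hpos] with x hx
    rcases eq_or_lt_of_le (hp0 x) with h0 | h0
    · simp [← h0]
    · have hs : (p x + q x) ≠ 0 := ne_of_gt hx
      have h1 : p x / (p x + q x) = (p x / ((p x + q x) / 2)) / 2 := by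
        field_simp
      rw [h1, Real.log_div (by positivity) (by norm_num)]
      ring
  have key2 : ∀ᵐ x ∂μ, Real.log (1 - p x / (p x + q x)) * q x =
      q x * Real.log (q x / ((p x + q x) / 2)) - Real.log 2 * q x := by
    filter_upwards [hpos] with x hx
    have hs : (p x + q x) ≠ 0 := ne_of_gt hx
    have h2 : 1 - p x / (p x + q x) = q x / (p x + q x) := by
      field_simp; ring
    rcases eq_or_lt_of_le (hq0 x) with h0 | h0
    · simp [← h0]
    · have h1 : q x / (p x + q x) = (q x / ((p x + q x) / 2)) / 2 := by
        field_simp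
      rw [h2, h1, Real.log_div (by positivity) (by norm_num)]
      ring
  rw [integral_congr_ae key1, integral_congr_ae key2,
    integral_sub hK1 (hpInt.const_mul _), integral_sub hK2 (hqInt.const_mul _),
    integral_const_mul, integral_const_mul, hp1, hq1]
  have : Real.log 4 = 2 * Real.log 2 := by
    rw [show (4 : ℝ) = 2 ^ 2 by norm_num, Real.log_pow]; push_cast; ring
  rw [this]; ring
end

section
/- Let $Z$ be a random variable on $\mathbb{R}^{d'}$ with $\mathbb{E}\|Z\| < \infty$, and for each $\theta$ let $g_\theta : \mathbb{R}^{d'} \to \mathbb{R}^d$ be measurable. Suppose the map $\theta \mapsto g_\theta(z)$ is locally Lipschitz uniformly: there exists $L$ such that $\|g_\theta(z) - g_{\theta'}(z)\| \leq L (1 + \|z\|) \|\theta - \theta'\|$ for all $z$ and all $\theta, \theta'$. Then $\theta \mapsto W_1(\mathbb{P}_r, \mathrm{law}(g_\theta(Z)))$ is Lipschitz continuous, for any fixed probability measure $\mathbb{P}_r$ on $\mathbb{R}^d$ with finite first moment. -/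
open MeasureTheory

/-- The 1-Wasserstein distance, defined as the infimum of `∫ dist(x,y) dγ`
over couplings `γ` of `μ` and `ν`. -/
noncomputable def W1 {X : Type} [MeasurableSpace X] [PseudoMetricSpace X]
    (μ ν : Measure X) : ℝ :=
  sInf {r | ∃ γ : Measure (X × X), IsProbabilityMeasure γ ∧
    γ.map Prod.fst = μ ∧ γ.map Prod.snd = ν ∧ r = ∫ p, dist p.1 p.2 ∂γ}

section Aux

open ProbabilityTheory

variable {d d' : ℕ} {Θ : Type} [NormedAddCommGroup Θ]

/-- Nonemptiness of the coupling set. -/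
lemma W1_set_nonempty {X : Type} [MeasurableSpace X] [PseudoMetricSpace X]
    (μ ν : Measure X) [IsProbabilityMeasure μ] [IsProbabilityMeasure ν] :
    {r | ∃ γ : Measure (X × X), IsProbabilityMeasure γ ∧
      γ.map Prod.fst = μ ∧ γ.map Prod.snd = ν ∧ r = ∫ p, dist p.1 p.2 ∂γ}.Nonempty := by
  refine ⟨∫ p, dist p.1 p.2 ∂(μ.prod ν), μ.prod ν, inferInstance, ?_, ?_, rfl⟩
  · exact Measure.fst_prod
  · exact Measure.snd_prod

lemma W1_set_bddBelow {X : Type} [MeasurableSpace X] [PseudoMetricSpace X]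
    (μ ν : Measure X) :
    BddBelow {r | ∃ γ : Measure (X × X), IsProbabilityMeasure γ ∧
      γ.map Prod.fst = μ ∧ γ.map Prod.snd = ν ∧ r = ∫ p, dist p.1 p.2 ∂γ} := by
  refine ⟨0, ?_⟩
  rintro r ⟨γ, _, _, _, rfl⟩
  exact integral_nonneg fun p => dist_nonneg

/-- Key one-sided inequality, in the case where all pushforwards have finite
first moment. -/
lemma W1_key {d d' : ℕ} {Θ : Type} [NormedAddCommGroup Θ]
    (ζ : Measure (EuclideanSpace ℝ (Fin d'))) [IsProbabilityMeasure ζ]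
    (hZ : Integrable (fun z => ‖z‖) ζ)
    (g : Θ → EuclideanSpace ℝ (Fin d') → EuclideanSpace ℝ (Fin d))
    (hgm : ∀ θ, Measurable (g θ))
    (L : ℝ)
    (hLip : ∀ (z : EuclideanSpace ℝ (Fin d')) (θ θ' : Θ),
      ‖g θ z - g θ' z‖ ≤ L * (1 + ‖z‖) * ‖θ - θ'‖)
    (Pr : Measure (EuclideanSpace ℝ (Fin d))) [IsProbabilityMeasure Pr]
    (hPr : Integrable (fun x => ‖x‖) Pr)
    (hint : ∀ θ, Integrable (fun z => ‖g θ z‖) ζ)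
    (θ θ' : Θ) :
    W1 Pr (ζ.map (g θ)) ≤ W1 Pr (ζ.map (g θ'))
      + (|L| * (1 + ∫ z, ‖z‖ ∂ζ)) * ‖θ - θ'‖ := by
  haveI hPθ : IsProbabilityMeasure (ζ.map (g θ)) :=
    Measure.isProbabilityMeasure_map (hgm θ).aemeasurable
  haveI hPθ' : IsProbabilityMeasure (ζ.map (g θ')) :=
    Measure.isProbabilityMeasure_map (hgm θ').aemeasurable
  rw [W1, W1, ← sub_le_iff_le_add]
  refine le_csInf (W1_set_nonempty Pr (ζ.map (g θ'))) ?_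
  rintro r ⟨γ, hγP, hfst, hsnd, rfl⟩
  rw [sub_le_iff_le_add]
  -- the swapped coupling, its conditional kernel, and the glued measure
  haveI : IsProbabilityMeasure (γ.map Prod.swap) :=
    Measure.isProbabilityMeasure_map measurable_swap.aemeasurable
  set γs : Measure (EuclideanSpace ℝ (Fin d) × EuclideanSpace ℝ (Fin d)) :=
    γ.map Prod.swap with hγs
  set κ := γs.condKernel with hκ
  set m : Measure (EuclideanSpace ℝ (Fin d') × EuclideanSpace ℝ (Fin d)) :=
    ζ ⊗ₘ (κ.comap (g θ') (hgm θ')) with hm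
  haveI : IsProbabilityMeasure m := by rw [hm]; infer_instance
  have hγsfst : γs.fst = ζ.map (g θ') := by
    rw [hγs, Measure.fst, Measure.map_map measurable_fst measurable_swap]
    exact hsnd
  set F : (EuclideanSpace ℝ (Fin d') × EuclideanSpace ℝ (Fin d)) →
      (EuclideanSpace ℝ (Fin d) × EuclideanSpace ℝ (Fin d)) :=
    fun p => (g θ' p.1, p.2) with hF
  have hFm : Measurable F := ((hgm θ').comp measurable_fst).prodMk measurable_snd
  have keyident : m.map F = γs := by
    ext s hs
    rw [Measure.map_apply hFm hs, hm, Measure.compProd_apply (hFm hs)]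
    conv_rhs => rw [← γs.disintegrate γs.condKernel]
    rw [Measure.compProd_apply hs, hγsfst,
      lintegral_map (Kernel.measurable_kernel_prodMk_left hs) (hgm θ')]
    congr 1
  have hmfst : m.map Prod.fst = ζ := Measure.fst_compProd ζ _
  have hmsnd : m.map Prod.snd = Pr := by
    have h1 : m.map Prod.snd = (m.map F).map Prod.snd := by
      rw [Measure.map_map measurable_snd hFm]
      rfl
    rw [h1, keyident, hγs, Measure.map_map measurable_snd measurable_swap]
    exact hfst
  set F2 : (EuclideanSpace ℝ (Fin d') × EuclideanSpace ℝ (Fin d)) →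
      (EuclideanSpace ℝ (Fin d) × EuclideanSpace ℝ (Fin d)) :=
    fun p => (p.2, g θ p.1) with hF2
  have hF2m : Measurable F2 := measurable_snd.prodMk ((hgm θ).comp measurable_fst)
  haveI : IsProbabilityMeasure (m.map F2) :=
    Measure.isProbabilityMeasure_map hF2m.aemeasurable
  -- integrability facts
  have hdistγ : Integrable (fun q : (EuclideanSpace ℝ (Fin d)) × (EuclideanSpace ℝ (Fin d)) =>
      dist q.1 q.2) γ := by
    have h1 : Integrable (fun q : (EuclideanSpace ℝ (Fin d)) × (EuclideanSpace ℝ (Fin d)) =>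
        ‖q.1‖) γ := by
      have := (integrable_map_measure (hfst ▸ hPr).aestronglyMeasurable
        measurable_fst.aemeasurable).mp (hfst ▸ hPr)
      exact this
    have hν : Integrable (fun x => ‖x‖) (ζ.map (g θ')) := by
      rw [integrable_map_measure measurable_norm.aestronglyMeasurable (hgm θ').aemeasurable]
      exact hint θ'
    have h2 : Integrable (fun q : (EuclideanSpace ℝ (Fin d)) × (EuclideanSpace ℝ (Fin d)) =>
        ‖q.2‖) γ := by
      have := (integrable_map_measure (hsnd ▸ hν).aestronglyMeasurable
        measurable_snd.aemeasurable).mp (hsnd ▸ hν)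
      exact this
    refine (h1.add h2).mono' (measurable_fst.dist measurable_snd).aestronglyMeasurable ?_
    filter_upwards with q
    rw [Real.norm_eq_abs, abs_of_nonneg dist_nonneg, dist_eq_norm]
    exact (norm_sub_le _ _)
  have hdistγs : Integrable (fun q : (EuclideanSpace ℝ (Fin d)) × (EuclideanSpace ℝ (Fin d)) =>
      dist q.2 q.1) γs := by
    rw [hγs, integrable_map_measure
      (measurable_snd.dist measurable_fst).aestronglyMeasurable
      measurable_swap.aemeasurable]
    exact hdistγ
  have hA : Integrable (fun p : (EuclideanSpace ℝ (Fin d')) × (EuclideanSpace ℝ (Fin d)) =>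
      dist p.2 (g θ' p.1)) m := by
    have := (integrable_map_measure
      (measurable_snd.dist measurable_fst).aestronglyMeasurable
      hFm.aemeasurable).mp (keyident ▸ hdistγs)
    exact this
  have hm1 : Integrable (fun p : (EuclideanSpace ℝ (Fin d')) × (EuclideanSpace ℝ (Fin d)) =>
      ‖p.1‖) m := by
    have := (integrable_map_measure (hmfst ▸ hZ).aestronglyMeasurable
      measurable_fst.aemeasurable).mp (hmfst ▸ hZ)
    exact this
  have hbnd : Integrable (fun p : (EuclideanSpace ℝ (Fin d')) × (EuclideanSpace ℝ (Fin d)) =>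
      |L| * (1 + ‖p.1‖) * ‖θ - θ'‖) m := by
    exact (((integrable_const (1:ℝ)).add hm1).const_mul |L|).mul_const ‖θ - θ'‖
  have hBle : ∀ p : (EuclideanSpace ℝ (Fin d')) × (EuclideanSpace ℝ (Fin d)),
      dist (g θ' p.1) (g θ p.1) ≤ |L| * (1 + ‖p.1‖) * ‖θ - θ'‖ := by
    intro p
    rw [dist_eq_norm]
    refine (hLip p.1 θ' θ).trans ?_
    rw [norm_sub_rev]
    have h1 : (0:ℝ) ≤ 1 + ‖p.1‖ := by positivity
    have h2 : L ≤ |L| := le_abs_self L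
    nlinarith [norm_nonneg (θ - θ'), mul_le_mul_of_nonneg_right
      (mul_le_mul_of_nonneg_right h2 h1) (norm_nonneg (θ - θ'))]
  have hB : Integrable (fun p : (EuclideanSpace ℝ (Fin d')) × (EuclideanSpace ℝ (Fin d)) =>
      dist (g θ' p.1) (g θ p.1)) m := by
    refine hbnd.mono' (((hgm θ').comp measurable_fst).dist
      ((hgm θ).comp measurable_fst)).aestronglyMeasurable ?_
    filter_upwards with p
    rw [Real.norm_eq_abs, abs_of_nonneg dist_nonneg]
    exact hBle p
  have htar : Integrable (fun p : (EuclideanSpace ℝ (Fin d')) × (EuclideanSpace ℝ (Fin d)) =>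
      dist p.2 (g θ p.1)) m := by
    refine (hA.add hB).mono' (measurable_snd.dist
      ((hgm θ).comp measurable_fst)).aestronglyMeasurable ?_
    filter_upwards with p
    rw [Real.norm_eq_abs, abs_of_nonneg dist_nonneg]
    exact dist_triangle _ _ _
  -- membership and bound
  refine csInf_le_of_le (W1_set_bddBelow Pr (ζ.map (g θ)))
    ⟨m.map F2, inferInstance, ?_, ?_, rfl⟩ ?_
  · rw [Measure.map_map measurable_fst hF2m]
    exact hmsnd
  · rw [Measure.map_map measurable_snd hF2m]
    have : (Prod.snd ∘ F2) = (g θ) ∘ Prod.fst := rfl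
    rw [this, ← Measure.map_map (hgm θ) measurable_fst, hmfst]
  · have hint1 : ∫ p, dist p.1 p.2 ∂(m.map F2)
        = ∫ p, dist p.2 (g θ p.1) ∂m := by
      rw [integral_map hF2m.aemeasurable
        (measurable_fst.dist measurable_snd).aestronglyMeasurable]
    have hintA : ∫ p, dist p.2 (g θ' p.1) ∂m = ∫ p, dist p.1 p.2 ∂γ := by
      have e1 : ∫ q, dist q.2 q.1 ∂γs = ∫ p, dist p.2 (g θ' p.1) ∂m := by
        rw [← keyident, integral_map hFm.aemeasurable
          (measurable_snd.dist measurable_fst).aestronglyMeasurable]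
      have e2 : ∫ q, dist q.2 q.1 ∂γs = ∫ p, dist p.1 p.2 ∂γ := by
        rw [hγs, integral_map measurable_swap.aemeasurable
          (measurable_snd.dist measurable_fst).aestronglyMeasurable]
        rfl
      rw [← e1, e2]
    have hintB : ∫ p, dist (g θ' p.1) (g θ p.1) ∂m
        ≤ (|L| * (1 + ∫ z, ‖z‖ ∂ζ)) * ‖θ - θ'‖ := by
      refine le_trans (integral_mono hB hbnd hBle) ?_
      have e3 : ∫ p : (EuclideanSpace ℝ (Fin d')) × (EuclideanSpace ℝ (Fin d)),
          |L| * (1 + ‖p.1‖) * ‖θ - θ'‖ ∂m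
          = |L| * (1 + ∫ p : (EuclideanSpace ℝ (Fin d')) × (EuclideanSpace ℝ (Fin d)),
              ‖p.1‖ ∂m) * ‖θ - θ'‖ := by
        rw [integral_mul_const, integral_const_mul, integral_add (integrable_const 1) hm1]
        simp
      have e4 : ∫ p : (EuclideanSpace ℝ (Fin d')) × (EuclideanSpace ℝ (Fin d)),
          ‖p.1‖ ∂m = ∫ z, ‖z‖ ∂ζ := by
        rw [← hmfst, integral_map measurable_fst.aemeasurable
          measurable_norm.aestronglyMeasurable]
      rw [e3, e4]
    calc ∫ p, dist p.1 p.2 ∂(m.map F2) = ∫ p, dist p.2 (g θ p.1) ∂m := hint1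
      _ ≤ ∫ p, (dist p.2 (g θ' p.1) + dist (g θ' p.1) (g θ p.1)) ∂m :=
          integral_mono htar (hA.add hB) fun p => dist_triangle _ _ _
      _ = (∫ p, dist p.2 (g θ' p.1) ∂m) + ∫ p, dist (g θ' p.1) (g θ p.1) ∂m :=
          integral_add hA hB
      _ ≤ (∫ p, dist p.1 p.2 ∂γ) + (|L| * (1 + ∫ z, ‖z‖ ∂ζ)) * ‖θ - θ'‖ := by
          rw [hintA]; exact add_le_add le_rfl hintB

end Aux

/-- If the second measure has infinite first moment, every coupling has a
non-integrable distance function, so (with Bochner's junk-value convention)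
`W1 = sInf {0} = 0`. -/
lemma W1_zero_of_not_integrable {d : ℕ}
    (Pr ν : Measure (EuclideanSpace ℝ (Fin d)))
    [IsProbabilityMeasure Pr] [IsProbabilityMeasure ν]
    (hPr : Integrable (fun x => ‖x‖) Pr)
    (hν : ¬ Integrable (fun x => ‖x‖) ν) :
    W1 Pr ν = 0 := by
  have hall : ∀ r ∈ {r | ∃ γ : Measure ((EuclideanSpace ℝ (Fin d)) × (EuclideanSpace ℝ (Fin d))),
      IsProbabilityMeasure γ ∧ γ.map Prod.fst = Pr ∧ γ.map Prod.snd = ν ∧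
      r = ∫ p, dist p.1 p.2 ∂γ}, r = 0 := by
    rintro r ⟨γ, hγP, hfst, hsnd, rfl⟩
    apply integral_undef
    intro hInt
    have h1 : Integrable (fun q : (EuclideanSpace ℝ (Fin d)) × (EuclideanSpace ℝ (Fin d)) =>
        ‖q.1‖) γ := by
      have := (integrable_map_measure (hfst ▸ hPr).aestronglyMeasurable
        measurable_fst.aemeasurable).mp (hfst ▸ hPr)
      exact this
    have h2 : Integrable (fun q : (EuclideanSpace ℝ (Fin d)) × (EuclideanSpace ℝ (Fin d)) =>
        ‖q.2‖) γ := by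
      refine (hInt.add h1).mono' measurable_snd.norm.aestronglyMeasurable ?_
      filter_upwards with q
      rw [Real.norm_eq_abs, abs_of_nonneg (norm_nonneg _)]
      have := norm_sub_norm_le q.2 q.1
      have hd : dist q.1 q.2 = ‖q.2 - q.1‖ := by rw [dist_eq_norm, norm_sub_rev]
      simp only [Pi.add_apply]
      linarith
    apply hν
    rw [← hsnd]
    exact (integrable_map_measure measurable_norm.aestronglyMeasurable
      measurable_snd.aemeasurable).mpr h2
  obtain ⟨r₀, hr₀⟩ := W1_set_nonempty Pr ν
  have h0 : (0:ℝ) ∈ {r | ∃ γ : Measure ((EuclideanSpace ℝ (Fin d)) × (EuclideanSpace ℝ (Fin d))),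
      IsProbabilityMeasure γ ∧ γ.map Prod.fst = Pr ∧ γ.map Prod.snd = ν ∧
      r = ∫ p, dist p.1 p.2 ∂γ} := (hall r₀ hr₀) ▸ hr₀
  exact le_antisymm (csInf_le (W1_set_bddBelow Pr ν) h0)
    (le_csInf ⟨r₀, hr₀⟩ fun r hr => (hall r hr).ge)

/-- Continuity theorem for Wasserstein GANs: if the generator family
`g_θ : ℝ^{d'} → ℝ^d` is uniformly locally Lipschitz in `θ`
(`‖g_θ(z) - g_{θ'}(z)‖ ≤ L (1+‖z‖) ‖θ - θ'‖`) and the latent variable `Z ∼ ζ`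
has finite first moment, then `θ ↦ W₁(ℙ_r, law(g_θ(Z)))` is Lipschitz
continuous, for any fixed probability measure `ℙ_r` with finite first moment. -/
theorem wgan_lipschitz_in_parameter
    {d d' : ℕ} {Θ : Type} [NormedAddCommGroup Θ]
    (ζ : Measure (EuclideanSpace ℝ (Fin d'))) [IsProbabilityMeasure ζ]
    (hZ : Integrable (fun z => ‖z‖) ζ)
    (g : Θ → EuclideanSpace ℝ (Fin d') → EuclideanSpace ℝ (Fin d))
    (hgm : ∀ θ, Measurable (g θ))
    (L : ℝ)
    (hLip : ∀ (z : EuclideanSpace ℝ (Fin d')) (θ θ' : Θ),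
      ‖g θ z - g θ' z‖ ≤ L * (1 + ‖z‖) * ‖θ - θ'‖)
    (Pr : Measure (EuclideanSpace ℝ (Fin d))) [IsProbabilityMeasure Pr]
    (hPr : Integrable (fun x => ‖x‖) Pr) :
    ∃ C : NNReal, LipschitzWith C (fun θ => W1 Pr (ζ.map (g θ))) := by
  have hζ0 : (0:ℝ) ≤ ∫ z, ‖z‖ ∂ζ := integral_nonneg fun z => norm_nonneg _
  by_cases hint : ∀ θ, Integrable (fun z => ‖g θ z‖) ζ
  · refine ⟨(|L| * (1 + ∫ z, ‖z‖ ∂ζ)).toNNReal,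
      LipschitzWith.of_dist_le_mul fun θ θ' => ?_⟩
    have hK0 : (0:ℝ) ≤ |L| * (1 + ∫ z, ‖z‖ ∂ζ) := by positivity
    rw [Real.coe_toNNReal _ hK0, Real.dist_eq, dist_eq_norm]
    have h1 := W1_key ζ hZ g hgm L hLip Pr hPr hint θ θ'
    have h2 := W1_key ζ hZ g hgm L hLip Pr hPr hint θ' θ
    rw [norm_sub_rev θ' θ] at h2
    rw [abs_sub_le_iff]
    constructor <;> linarith
  · push_neg at hint
    obtain ⟨θ₀, hθ₀⟩ := hint
    have hall : ∀ θ, ¬ Integrable (fun z => ‖g θ z‖) ζ := by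
      intro θ hθ
      apply hθ₀
      have hb : Integrable (fun z => ‖g θ z‖ + |L| * (1 + ‖z‖) * ‖θ₀ - θ‖) ζ :=
        hθ.add ((((integrable_const (1:ℝ)).add hZ).const_mul |L|).mul_const _)
      refine hb.mono' (hgm θ₀).norm.aestronglyMeasurable ?_
      filter_upwards with z
      rw [Real.norm_eq_abs, abs_of_nonneg (norm_nonneg _)]
      have h3 : ‖g θ₀ z‖ - ‖g θ z‖ ≤ ‖g θ₀ z - g θ z‖ := norm_sub_norm_le _ _
      have h4 := hLip z θ₀ θ
      have h5 : L * (1 + ‖z‖) * ‖θ₀ - θ‖ ≤ |L| * (1 + ‖z‖) * ‖θ₀ - θ‖ := by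
        have : (0:ℝ) ≤ (1 + ‖z‖) * ‖θ₀ - θ‖ := by positivity
        nlinarith [le_abs_self L]
      linarith
    have hzero : ∀ θ, W1 Pr (ζ.map (g θ)) = 0 := by
      intro θ
      haveI : IsProbabilityMeasure (ζ.map (g θ)) :=
        Measure.isProbabilityMeasure_map (hgm θ).aemeasurable
      refine W1_zero_of_not_integrable Pr _ hPr ?_
      intro hcon
      exact hall θ ((integrable_map_measure measurable_norm.aestronglyMeasurable
        (hgm θ).aemeasurable).mp hcon)
    refine ⟨1, LipschitzWith.of_dist_le_mul fun θ θ' => ?_⟩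
    simp only [hzero, dist_self, NNReal.coe_one, one_mul]
    exact dist_nonneg
end

section
/- Let $\mu, \nu$ be probability measures on $\mathbb{R}$ with cumulative distribution functions $F, G$ and finite first moments. Then $W_1(\mu, \nu) = \int_{\mathbb{R}} |F(t) - G(t)|\, dt$. -/
open MeasureTheory

open Set Filter ProbabilityTheory
open scoped Topology ENNReal

lemma ne_le_iff (a b t : ℝ) : ((a ≤ t) ≠ (b ≤ t)) ↔ (min a b ≤ t ∧ t < max a b) := by
  simp only [ne_eq, eq_iff_iff, not_iff, not_le]
  rcases le_total a b with hab | hab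
  · rw [min_eq_left hab, max_eq_right hab]
    constructor
    · intro h
      by_cases h1 : t < a
      · exact ⟨by linarith [h.mp h1], by linarith⟩
      · push_neg at h1
        refine ⟨h1, ?_⟩
        by_contra h2
        exact absurd (h.mpr (not_lt.mp h2)) (not_lt.mpr h1)
    · rintro ⟨h1, h2⟩
      constructor <;> intro <;> linarith
  · rw [min_eq_right hab, max_eq_left hab]
    constructor
    · intro h
      by_cases h1 : t < a
      · exact ⟨h.mp h1, h1⟩
      · push_neg at h1
        exfalso
        have hb : b ≤ t := le_trans hab h1
        exact absurd (h.mpr hb) (not_lt.mpr h1)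
    · rintro ⟨h1, h2⟩
      constructor <;> intro <;> linarith

lemma vol_ne_le (a b : ℝ) : volume {t : ℝ | (a ≤ t) ≠ (b ≤ t)} = ENNReal.ofReal |a - b| := by
  have hset : {t : ℝ | (a ≤ t) ≠ (b ≤ t)} = Ico (min a b) (max a b) := by
    ext t; exact ne_le_iff a b t
  rw [hset, Real.volume_Ico]
  congr 1
  rcases le_total a b with h | h
  · rw [max_eq_right h, min_eq_left h, abs_sub_comm, abs_of_nonneg (by linarith)]
  · rw [max_eq_left h, min_eq_right h, abs_of_nonneg (by linarith)]

/-- clamped quantile function -/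
noncomputable def qtl (μ : Measure ℝ) (u : ℝ) : ℝ :=
  sInf {x | (if u ∈ Set.Ioo (0:ℝ) 1 then u else 1/2) ≤ cdf μ x}

lemma qtl_set_nonempty (μ : Measure ℝ) (u : ℝ) (hu : u ∈ Set.Ioo (0:ℝ) 1) :
    {x | u ≤ cdf μ x}.Nonempty := by
  have h := (tendsto_cdf_atTop μ).eventually (eventually_gt_nhds hu.2)
  rcases h.exists with ⟨x, hx⟩
  exact ⟨x, hx.le⟩

lemma qtl_set_bddBelow (μ : Measure ℝ) (u : ℝ) (hu : u ∈ Set.Ioo (0:ℝ) 1) :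
    BddBelow {x | u ≤ cdf μ x} := by
  have h := (tendsto_cdf_atBot μ).eventually (eventually_lt_nhds hu.1)
  rcases h.exists with ⟨x₀, hx₀⟩
  refine ⟨x₀, fun z hz => ?_⟩
  by_contra hzx
  push_neg at hzx
  exact absurd (le_trans hz (monotone_cdf μ hzx.le)) (not_le.mpr hx₀)

lemma qtl_le_iff (μ : Measure ℝ) (u : ℝ) (hu : u ∈ Set.Ioo (0:ℝ) 1) (x : ℝ) :
    qtl μ u ≤ x ↔ u ≤ cdf μ x := by
  have hq : qtl μ u = sInf {x | u ≤ cdf μ x} := by rw [qtl, if_pos hu]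
  constructor
  · intro h
    -- first: u ≤ cdf μ (qtl μ u) by right continuity
    have hne := qtl_set_nonempty μ u hu
    have hbdd := qtl_set_bddBelow μ u hu
    have key : u ≤ cdf μ (qtl μ u) := by
      have hrc : ContinuousWithinAt (cdf μ) (Set.Ioi (qtl μ u)) (qtl μ u) :=
        ((cdf μ).right_continuous (qtl μ u)).mono Set.Ioi_subset_Ici_self
      refine ge_of_tendsto hrc ?_
      filter_upwards [self_mem_nhdsWithin] with y hy
      have hy' : sInf {x | u ≤ cdf μ x} < y := by rw [← hq]; exact hy
      rcases exists_lt_of_csInf_lt hne hy' with ⟨z, hz, hzy⟩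
      exact le_trans hz (monotone_cdf μ hzy.le)
    exact le_trans key (monotone_cdf μ h)
  · intro h
    rw [hq]
    exact csInf_le (qtl_set_bddBelow μ u hu) h

lemma qtl_eq_of_not_mem (μ : Measure ℝ) (u : ℝ) (hu : u ∉ Set.Ioo (0:ℝ) 1) :
    qtl μ u = qtl μ (1/2) := by
  rw [qtl, qtl, if_neg hu, if_pos (by norm_num : (1:ℝ)/2 ∈ Set.Ioo (0:ℝ) 1)]

lemma measurable_qtl (μ : Measure ℝ) : Measurable (qtl μ) := by
  apply measurable_of_Iic
  intro x
  have : qtl μ ⁻¹' Set.Iic x =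
      (Set.Ioo (0:ℝ) 1 ∩ Set.Iic (cdf μ x)) ∪
      ((Set.Ioo (0:ℝ) 1)ᶜ ∩ {u : ℝ | qtl μ (1/2) ≤ x}) := by
    ext u
    by_cases hu : u ∈ Set.Ioo (0:ℝ) 1
    · simp [hu, qtl_le_iff μ u hu x]
    · simp [hu, qtl_eq_of_not_mem μ u hu]
  rw [this]
  by_cases h : qtl μ (1/2) ≤ x
  · simp only [h, Set.setOf_true]
    exact (measurableSet_Ioo.inter measurableSet_Iic).union
      (measurableSet_Ioo.compl.inter MeasurableSet.univ)
  · simp only [h, Set.setOf_false]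
    exact (measurableSet_Ioo.inter measurableSet_Iic).union
      (measurableSet_Ioo.compl.inter (MeasurableSet.empty))

instance : IsProbabilityMeasure (volume.restrict (Set.Ioo (0:ℝ) 1)) :=
  ⟨by simp [Real.volume_Ioo]⟩

lemma map_qtl (μ : Measure ℝ) [IsProbabilityMeasure μ] :
    (volume.restrict (Set.Ioo (0:ℝ) 1)).map (qtl μ) = μ := by
  haveI : IsProbabilityMeasure ((volume.restrict (Set.Ioo (0:ℝ) 1)).map (qtl μ)) :=
    Measure.isProbabilityMeasure_map (measurable_qtl μ).aemeasurable
  refine Measure.ext_of_Iic _ _ (fun x => ?_)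
  rw [Measure.map_apply (measurable_qtl μ) measurableSet_Iic,
    Measure.restrict_apply (measurable_qtl μ measurableSet_Iic)]
  have hset : qtl μ ⁻¹' Set.Iic x ∩ Set.Ioo 0 1 = Set.Iic (cdf μ x) ∩ Set.Ioo 0 1 := by
    ext u
    simp only [Set.mem_inter_iff, Set.mem_preimage, Set.mem_Iic, and_congr_left_iff]
    intro hu
    exact qtl_le_iff μ u hu x
  rw [hset, ← ofReal_cdf μ x]
  have h0 : 0 ≤ cdf μ x := cdf_nonneg μ x
  have h1 : cdf μ x ≤ 1 := cdf_le_one μ x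
  apply le_antisymm
  · calc volume (Set.Iic (cdf μ x) ∩ Set.Ioo 0 1) ≤ volume (Set.Ioc 0 (cdf μ x)) := by
          apply measure_mono
          rintro u ⟨hu1, hu2, hu3⟩
          exact ⟨hu2, hu1⟩
        _ = ENNReal.ofReal (cdf μ x) := by rw [Real.volume_Ioc, sub_zero]
  · calc ENNReal.ofReal (cdf μ x) = volume (Set.Ioo 0 (cdf μ x)) := by
          rw [Real.volume_Ioo, sub_zero]
        _ ≤ volume (Set.Iic (cdf μ x) ∩ Set.Ioo 0 1) := by
          apply measure_mono
          rintro u ⟨hu1, hu2⟩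
          exact ⟨hu2.le, hu1, lt_of_lt_of_le hu2 h1⟩

lemma ne_ge_iff (p q u : ℝ) : ((u ≤ p) ≠ (u ≤ q)) ↔ (min p q < u ∧ u ≤ max p q) := by
  simp only [ne_eq, eq_iff_iff, not_iff, not_le]
  rcases le_total p q with hpq | hpq
  · rw [min_eq_left hpq, max_eq_right hpq]
    constructor
    · intro h
      by_cases h1 : p < u
      · exact ⟨h1, h.mp h1⟩
      · push_neg at h1
        exact absurd (h.mpr (le_trans h1 hpq)) (not_lt.mpr h1)
    · rintro ⟨h1, h2⟩
      constructor <;> intro <;> linarith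
  · rw [min_eq_right hpq, max_eq_left hpq]
    constructor
    · intro h
      by_cases h1 : q < u
      · refine ⟨h1, ?_⟩
        by_contra h2
        push_neg at h2
        exact absurd h1 (not_lt.mpr (h.mp h2))
      · push_neg at h1
        exfalso
        exact absurd (h.mpr h1) (by linarith)
    · rintro ⟨h1, h2⟩
      constructor <;> intro <;> linarith

lemma vol_ne_ge (p q : ℝ) (hp0 : 0 ≤ p) (hp1 : p ≤ 1) (hq0 : 0 ≤ q) (hq1 : q ≤ 1) :
    volume ({u : ℝ | (u ≤ p) ≠ (u ≤ q)} ∩ Set.Ioo 0 1) = ENNReal.ofReal |p - q| := by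
  have hset : {u : ℝ | (u ≤ p) ≠ (u ≤ q)} = Set.Ioc (min p q) (max p q) := by
    ext u; exact ne_ge_iff p q u
  have habs : |p - q| = max p q - min p q := by
    rcases le_total p q with h | h
    · rw [max_eq_right h, min_eq_left h, abs_sub_comm, abs_of_nonneg (by linarith)]
    · rw [max_eq_left h, min_eq_right h, abs_of_nonneg (by linarith)]
  rw [hset, habs]
  have hm0 : 0 ≤ min p q := le_min hp0 hq0
  have hM1 : max p q ≤ 1 := max_le hp1 hq1
  apply le_antisymm
  · calc volume (Set.Ioc (min p q) (max p q) ∩ Set.Ioo 0 1)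
        ≤ volume (Set.Ioc (min p q) (max p q)) := measure_mono Set.inter_subset_left
      _ = ENNReal.ofReal (max p q - min p q) := Real.volume_Ioc
  · calc ENNReal.ofReal (max p q - min p q) = volume (Set.Ioo (min p q) (max p q)) :=
          Real.volume_Ioo.symm
      _ ≤ volume (Set.Ioc (min p q) (max p q) ∩ Set.Ioo 0 1) := by
          apply measure_mono
          rintro u ⟨hu1, hu2⟩
          exact ⟨⟨hu1, hu2.le⟩, lt_of_le_of_lt hm0 hu1, lt_of_lt_of_le hu2 hM1⟩

lemma measurable_D : MeasurableSet {x : (ℝ × ℝ) × ℝ | (x.1.1 ≤ x.2) ≠ (x.1.2 ≤ x.2)} := by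
  have hA : MeasurableSet {x : (ℝ × ℝ) × ℝ | x.1.1 ≤ x.2} :=
    measurableSet_le (measurable_fst.fst) measurable_snd
  have hB : MeasurableSet {x : (ℝ × ℝ) × ℝ | x.1.2 ≤ x.2} :=
    measurableSet_le (measurable_fst.snd) measurable_snd
  have : {x : (ℝ × ℝ) × ℝ | (x.1.1 ≤ x.2) ≠ (x.1.2 ≤ x.2)} =
      ({x : (ℝ × ℝ) × ℝ | x.1.1 ≤ x.2} \ {x | x.1.2 ≤ x.2}) ∪
      ({x | x.1.2 ≤ x.2} \ {x | x.1.1 ≤ x.2}) := by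
    ext x
    simp only [Set.mem_union, Set.mem_diff, Set.mem_setOf_eq, ne_eq, eq_iff_iff, not_iff]
    by_cases h1 : x.1.1 ≤ x.2 <;> by_cases h2 : x.1.2 ≤ x.2 <;> simp [h1, h2]
  rw [this]
  exact (hA.diff hB).union (hB.diff hA)

lemma key_swap (γ : Measure (ℝ × ℝ)) [IsFiniteMeasure γ] :
    ∫⁻ p, ENNReal.ofReal (dist p.1 p.2) ∂γ
      = ∫⁻ t, γ {p : ℝ × ℝ | (p.1 ≤ t) ≠ (p.2 ≤ t)} := by
  set D := {x : (ℝ × ℝ) × ℝ | (x.1.1 ≤ x.2) ≠ (x.1.2 ≤ x.2)} with hD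
  have hDm := measurable_D
  have h1 : ∀ p : ℝ × ℝ, ENNReal.ofReal (dist p.1 p.2)
      = ∫⁻ t, D.indicator 1 (p, t) := by
    intro p
    have hsec : (fun t => D.indicator (1 : (ℝ × ℝ) × ℝ → ℝ≥0∞) (p, t))
        = ((fun t => (p, t)) ⁻¹' D).indicator 1 := by
      funext t
      by_cases h : (p, t) ∈ D <;> simp [Set.indicator_apply, Set.mem_preimage, h]
    rw [hsec, lintegral_indicator (hDm.preimage (measurable_prodMk_left)) 1]
    simp only [Pi.one_apply, setLIntegral_one]
    have : (fun t => (p, t)) ⁻¹' D = {t : ℝ | (p.1 ≤ t) ≠ (p.2 ≤ t)} := rfl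
    rw [this, vol_ne_le, Real.dist_eq]
  have h2 : ∀ t : ℝ, γ {p : ℝ × ℝ | (p.1 ≤ t) ≠ (p.2 ≤ t)}
      = ∫⁻ p, D.indicator 1 (p, t) ∂γ := by
    intro t
    have hsec : (fun p => D.indicator (1 : (ℝ × ℝ) × ℝ → ℝ≥0∞) (p, t))
        = ((fun p : ℝ × ℝ => (p, t)) ⁻¹' D).indicator 1 := by
      funext p
      by_cases h : (p, t) ∈ D <;> simp [Set.indicator_apply, Set.mem_preimage, h]
    rw [hsec, lintegral_indicator (hDm.preimage (measurable_prodMk_right)) 1]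
    simp only [Pi.one_apply, setLIntegral_one]
    rfl
  simp_rw [h1, h2]
  exact lintegral_lintegral_swap ((measurable_one.indicator hDm).aemeasurable)

lemma lint_abs_fst (γ : Measure (ℝ × ℝ)) (μ : Measure ℝ) (hfst : γ.map Prod.fst = μ) :
    ∫⁻ p : ℝ × ℝ, ENNReal.ofReal |p.1| ∂γ = ∫⁻ x, ENNReal.ofReal |x| ∂μ := by
  rw [← hfst, lintegral_map (by fun_prop) measurable_fst]

lemma lint_abs_snd (γ : Measure (ℝ × ℝ)) (ν : Measure ℝ) (hsnd : γ.map Prod.snd = ν) :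
    ∫⁻ p : ℝ × ℝ, ENNReal.ofReal |p.2| ∂γ = ∫⁻ x, ENNReal.ofReal |x| ∂ν := by
  rw [← hsnd, lintegral_map (by fun_prop) measurable_snd]

lemma lint_dist_lt_top (γ : Measure (ℝ × ℝ)) (μ ν : Measure ℝ)
    (hμ : Integrable (fun x => x) μ) (hν : Integrable (fun x => x) ν)
    (hfst : γ.map Prod.fst = μ) (hsnd : γ.map Prod.snd = ν) :
    ∫⁻ p, ENNReal.ofReal (dist p.1 p.2) ∂γ < ⊤ := by
  have hle : ∀ p : ℝ × ℝ, ENNReal.ofReal (dist p.1 p.2)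
      ≤ ENNReal.ofReal |p.1| + ENNReal.ofReal |p.2| := by
    intro p
    rw [Real.dist_eq]
    refine le_trans (ENNReal.ofReal_le_ofReal (abs_sub _ _)) (ENNReal.ofReal_add_le)
  calc ∫⁻ p, ENNReal.ofReal (dist p.1 p.2) ∂γ
      ≤ ∫⁻ p : ℝ × ℝ, (ENNReal.ofReal |p.1| + ENNReal.ofReal |p.2|) ∂γ := lintegral_mono hle
    _ = (∫⁻ p : ℝ × ℝ, ENNReal.ofReal |p.1| ∂γ) + ∫⁻ p : ℝ × ℝ, ENNReal.ofReal |p.2| ∂γ :=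
        lintegral_add_left (by fun_prop) _
    _ = (∫⁻ x, ENNReal.ofReal |x| ∂μ) + ∫⁻ x, ENNReal.ofReal |x| ∂ν := by
        rw [lint_abs_fst γ μ hfst, lint_abs_snd γ ν hsnd]
    _ < ⊤ := by
        have h1 := hμ.hasFiniteIntegral
        have h2 := hν.hasFiniteIntegral
        rw [HasFiniteIntegral] at h1 h2
        simp only [Real.enorm_eq_ofReal_abs] at h1 h2
        exact ENNReal.add_lt_top.mpr ⟨h1, h2⟩

lemma cdf_diff_le (γ : Measure (ℝ × ℝ)) [IsProbabilityMeasure γ] (μ ν : Measure ℝ)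
    [IsProbabilityMeasure μ] [IsProbabilityMeasure ν]
    (hfst : γ.map Prod.fst = μ) (hsnd : γ.map Prod.snd = ν) (t : ℝ) :
    ENNReal.ofReal |cdf μ t - cdf ν t| ≤ γ {p : ℝ × ℝ | (p.1 ≤ t) ≠ (p.2 ≤ t)} := by
  set A : Set (ℝ × ℝ) := {p | p.1 ≤ t} with hA
  set B : Set (ℝ × ℝ) := {p | p.2 ≤ t} with hB
  set D : Set (ℝ × ℝ) := {p : ℝ × ℝ | (p.1 ≤ t) ≠ (p.2 ≤ t)} with hDdef
  have hμA : μ (Set.Iic t) = γ A := by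
    rw [← hfst, Measure.map_apply measurable_fst measurableSet_Iic]; rfl
  have hνB : ν (Set.Iic t) = γ B := by
    rw [← hsnd, Measure.map_apply measurable_snd measurableSet_Iic]; rfl
  have hsub1 : A ⊆ B ∪ D := by
    intro p hp
    by_cases hb : p ∈ B
    · exact Or.inl hb
    · refine Or.inr ?_
      simp only [hDdef, Set.mem_setOf_eq, ne_eq, eq_iff_iff]
      intro hiff
      exact hb (hiff.mp hp)
  have hsub2 : B ⊆ A ∪ D := by
    intro p hp
    by_cases ha : p ∈ A
    · exact Or.inl ha
    · refine Or.inr ?_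
      simp only [hDdef, Set.mem_setOf_eq, ne_eq, eq_iff_iff]
      intro hiff
      exact ha (hiff.mpr hp)
  have h1 : γ A ≤ γ B + γ D := le_trans (measure_mono hsub1) (measure_union_le _ _)
  have h2 : γ B ≤ γ A + γ D := le_trans (measure_mono hsub2) (measure_union_le _ _)
  have hAt : γ A ≠ ⊤ := measure_ne_top γ A
  have hBt : γ B ≠ ⊤ := measure_ne_top γ B
  have hDt : γ D ≠ ⊤ := measure_ne_top γ D
  have h1' : (γ A).toReal ≤ (γ B).toReal + (γ D).toReal := by
    rw [← ENNReal.toReal_add hBt hDt]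
    exact ENNReal.toReal_mono (ENNReal.add_ne_top.mpr ⟨hBt, hDt⟩) h1
  have h2' : (γ B).toReal ≤ (γ A).toReal + (γ D).toReal := by
    rw [← ENNReal.toReal_add hAt hDt]
    exact ENNReal.toReal_mono (ENNReal.add_ne_top.mpr ⟨hAt, hDt⟩) h2
  have habs : |cdf μ t - cdf ν t| ≤ (γ D).toReal := by
    rw [cdf_eq_real μ t, cdf_eq_real ν t, measureReal_def, measureReal_def, hμA, hνB, abs_sub_le_iff]
    constructor <;> linarith
  calc ENNReal.ofReal |cdf μ t - cdf ν t| ≤ ENNReal.ofReal (γ D).toReal :=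
        ENNReal.ofReal_le_ofReal habs
    _ = γ D := ENNReal.ofReal_toReal hDt

section Coupling
variable (μ ν : Measure ℝ) [IsProbabilityMeasure μ] [IsProbabilityMeasure ν]

noncomputable def monoCoupling : Measure (ℝ × ℝ) :=
  (volume.restrict (Set.Ioo (0:ℝ) 1)).map (fun u => (qtl μ u, qtl ν u))

lemma measurable_pair_qtl : Measurable (fun u => (qtl μ u, qtl ν u)) :=
  (measurable_qtl μ).prodMk (measurable_qtl ν)

instance : IsProbabilityMeasure (monoCoupling μ ν) :=
  Measure.isProbabilityMeasure_map (measurable_pair_qtl μ ν).aemeasurable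

lemma monoCoupling_fst : (monoCoupling μ ν).map Prod.fst = μ := by
  rw [monoCoupling, Measure.map_map measurable_fst (measurable_pair_qtl μ ν)]
  exact map_qtl μ

lemma monoCoupling_snd : (monoCoupling μ ν).map Prod.snd = ν := by
  rw [monoCoupling, Measure.map_map measurable_snd (measurable_pair_qtl μ ν)]
  exact map_qtl ν

lemma monoCoupling_section (t : ℝ) :
    (monoCoupling μ ν) {p : ℝ × ℝ | (p.1 ≤ t) ≠ (p.2 ≤ t)}
      = ENNReal.ofReal |cdf μ t - cdf ν t| := by
  have hDt : MeasurableSet {p : ℝ × ℝ | (p.1 ≤ t) ≠ (p.2 ≤ t)} :=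
    measurable_D.preimage (measurable_prodMk_right)
  rw [monoCoupling, Measure.map_apply (measurable_pair_qtl μ ν) hDt,
    Measure.restrict_apply ((measurable_pair_qtl μ ν) hDt)]
  have hset : (fun u => (qtl μ u, qtl ν u)) ⁻¹' {p : ℝ × ℝ | (p.1 ≤ t) ≠ (p.2 ≤ t)}
        ∩ Set.Ioo 0 1
      = {u : ℝ | (u ≤ cdf μ t) ≠ (u ≤ cdf ν t)} ∩ Set.Ioo 0 1 := by
    ext u
    simp only [Set.mem_inter_iff, Set.mem_preimage, Set.mem_setOf_eq, and_congr_left_iff]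
    intro hu
    rw [← qtl_le_iff μ u hu t, ← qtl_le_iff ν u hu t]
  rw [hset]
  exact vol_ne_ge _ _ (cdf_nonneg μ t) (cdf_le_one μ t) (cdf_nonneg ν t) (cdf_le_one ν t)

lemma monoCoupling_lintegral :
    ∫⁻ p, ENNReal.ofReal (dist p.1 p.2) ∂(monoCoupling μ ν)
      = ∫⁻ t, ENNReal.ofReal |cdf μ t - cdf ν t| := by
  rw [key_swap]
  exact lintegral_congr (monoCoupling_section μ ν)

end Coupling

/-- On the real line, the 1-Wasserstein distance between probability measures
with finite first moments equals the `L¹` distance of their CDFs: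
`W₁(μ, ν) = ∫ |F(t) - G(t)| dt`. -/
theorem wasserstein_eq_integral_cdf
    (μ ν : Measure ℝ) [IsProbabilityMeasure μ] [IsProbabilityMeasure ν]
    (hμ : Integrable (fun x => x) μ) (hν : Integrable (fun x => x) ν) :
    W1 μ ν = ∫ t, |(μ (Set.Iic t)).toReal - (ν (Set.Iic t)).toReal| := by
  set L : ℝ≥0∞ := ∫⁻ t, ENNReal.ofReal |cdf μ t - cdf ν t| with hL
  -- the RHS equals L.toReal
  have hmeas : AEStronglyMeasurable (fun t => |cdf μ t - cdf ν t|) volume :=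
    (((monotone_cdf μ).measurable.sub (monotone_cdf ν).measurable).abs).aestronglyMeasurable
  have hRHS : ∫ t, |(μ (Set.Iic t)).toReal - (ν (Set.Iic t)).toReal|
      = L.toReal := by
    have h1 : ∀ t : ℝ, |(μ (Set.Iic t)).toReal - (ν (Set.Iic t)).toReal|
        = |cdf μ t - cdf ν t| := by
      intro t; rw [cdf_eq_real μ t, cdf_eq_real ν t, measureReal_def, measureReal_def]
    simp_rw [h1]
    rw [integral_eq_lintegral_of_nonneg_ae (Filter.Eventually.of_forall fun t => abs_nonneg _)
      hmeas]
  rw [hRHS, W1]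
  -- lower bound for every element of the set
  have hlow : ∀ r ∈ {r | ∃ γ : Measure (ℝ × ℝ), IsProbabilityMeasure γ ∧
      γ.map Prod.fst = μ ∧ γ.map Prod.snd = ν ∧ r = ∫ p, dist p.1 p.2 ∂γ},
      L.toReal ≤ r := by
    rintro r ⟨γ, hγ, hfst, hsnd, rfl⟩
    haveI := hγ
    have hdistm : AEStronglyMeasurable (fun p : ℝ × ℝ => dist p.1 p.2) γ :=
      (continuous_fst.dist continuous_snd).aestronglyMeasurable
    rw [integral_eq_lintegral_of_nonneg_ae
      (Filter.Eventually.of_forall fun p => dist_nonneg) hdistm]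
    have hfin := lint_dist_lt_top γ μ ν hμ hν hfst hsnd
    have hle : L ≤ ∫⁻ p, ENNReal.ofReal (dist p.1 p.2) ∂γ := by
      rw [key_swap]
      exact lintegral_mono (cdf_diff_le γ μ ν hfst hsnd)
    exact ENNReal.toReal_mono hfin.ne hle
  -- the monotone coupling achieves L.toReal
  have hmem : L.toReal ∈ {r | ∃ γ : Measure (ℝ × ℝ), IsProbabilityMeasure γ ∧
      γ.map Prod.fst = μ ∧ γ.map Prod.snd = ν ∧ r = ∫ p, dist p.1 p.2 ∂γ} := by
    refine ⟨monoCoupling μ ν, inferInstance, monoCoupling_fst μ ν, monoCoupling_snd μ ν, ?_⟩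
    have hdistm : AEStronglyMeasurable (fun p : ℝ × ℝ => dist p.1 p.2) (monoCoupling μ ν) :=
      (continuous_fst.dist continuous_snd).aestronglyMeasurable
    rw [integral_eq_lintegral_of_nonneg_ae
      (Filter.Eventually.of_forall fun p => dist_nonneg) hdistm, monoCoupling_lintegral]
  exact le_antisymm (csInf_le ⟨L.toReal, hlow⟩ hmem) (le_csInf ⟨L.toReal, hmem⟩ hlow)
end
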